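/- arXiv:1503.08923 — 4 statements merged into one kernel-verified Lean document; each statement's English description precedes it below -/
import Mathlib

section
/- (Theorem 3.1, density-ratio form.) Let Σ be a symmetric positive definite m×m real matrix with m ≥ 2, V > 0, p ∈ (0,1), and fix an index j. Let E_jj = e_j e_jᵀ be the m×m matrix with a single 1 in position (j,j). With σ_{(j)}, Σ_{(j)}, u_j(x), σ_{j·} as defined below and U_j(x) = (x_j − u_j(x)) / σ_{j·}^{1/2}, one has for every x ∈ ℝ^m: (p · φ_{Σ + V E_jj}(x)) / ((1−p) · φ_Σ(x)) = (p/(1−p)) · √(σ_{j·}/(V + σ_{j·})) · exp( (V/(2(V + σ_{j·}))) · U_j(x)² ). (Applied with Σ replaced by the submatrix Σ_{(i_1,…,i_{t−1})}, this is the functional relationship between the BSD statistic S_{tj} and the MRD statistic U_{tj}.) -/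
open Matrix MeasureTheory Real Filter

/-- Density of the centered multivariate normal distribution `N(0, A)` at `x`. -/
noncomputable def gaussDensity {n : ℕ} (A : Matrix (Fin n) (Fin n) ℝ) (x : Fin n → ℝ) : ℝ :=
  (2 * Real.pi) ^ (-(n : ℝ) / 2) * A.det ^ (-(1 : ℝ) / 2) *
    Real.exp (-(1 / 2) * (x ⬝ᵥ (A⁻¹ *ᵥ x)))

/-- The submatrix of `Sig` with row and column `j` deleted. -/
noncomputable def subMat {n : ℕ} (Sig : Matrix (Fin (n + 1)) (Fin (n + 1)) ℝ)
    (j : Fin (n + 1)) : Matrix (Fin n) (Fin n) ℝ :=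
  Sig.submatrix j.succAbove j.succAbove

/-- The `j`-th column of `Sig` with its `j`-th entry removed. -/
noncomputable def colVec {n : ℕ} (Sig : Matrix (Fin (n + 1)) (Fin (n + 1)) ℝ)
    (j : Fin (n + 1)) : Fin n → ℝ :=
  fun i => Sig (j.succAbove i) j

/-- Conditional mean `u_j(x) = σ_{(j)}ᵀ Σ_{(j)}⁻¹ x^{(j)}`. -/
noncomputable def condMean {n : ℕ} (Sig : Matrix (Fin (n + 1)) (Fin (n + 1)) ℝ)
    (j : Fin (n + 1)) (x : Fin (n + 1) → ℝ) : ℝ :=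
  colVec Sig j ⬝ᵥ ((subMat Sig j)⁻¹ *ᵥ (x ∘ j.succAbove))

/-- Schur complement `σ_{j·} = σ_{jj} − σ_{(j)}ᵀ Σ_{(j)}⁻¹ σ_{(j)}`. -/
noncomputable def schurC {n : ℕ} (Sig : Matrix (Fin (n + 1)) (Fin (n + 1)) ℝ)
    (j : Fin (n + 1)) : ℝ :=
  Sig j j - colVec Sig j ⬝ᵥ ((subMat Sig j)⁻¹ *ᵥ colVec Sig j)

/-- The residual `U_j(x) = (x_j − u_j(x)) / σ_{j·}^{1/2}`. -/
noncomputable def resU {n : ℕ} (Sig : Matrix (Fin (n + 1)) (Fin (n + 1)) ℝ)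
    (j : Fin (n + 1)) (x : Fin (n + 1) → ℝ) : ℝ :=
  (x j - condMean Sig j x) / Real.sqrt (schurC Sig j)

lemma mulVec_insertNth_apply {n : ℕ} (Sig : Matrix (Fin (n + 1)) (Fin (n + 1)) ℝ)
    (j : Fin (n + 1)) (c : ℝ) (w : Fin n → ℝ) (i : Fin (n + 1)) :
    (Sig *ᵥ j.insertNth c w) i = Sig i j * c + ∑ k, Sig i (j.succAbove k) * w k := by
  simp only [mulVec, dotProduct]
  rw [Fin.sum_univ_succAbove _ j]
  simp

lemma subMat_posDef {n : ℕ} {Sig : Matrix (Fin (n + 1)) (Fin (n + 1)) ℝ}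
    (hSig : Sig.PosDef) (j : Fin (n + 1)) : (subMat Sig j).PosDef := by
  refine posDef_iff_dotProduct_mulVec.mpr ⟨?_, ?_⟩
  · show (subMat Sig j)ᴴ = subMat Sig j
    rw [subMat, conjTranspose_submatrix, hSig.1.eq]
  · intro v hv
    have hy : (j.insertNth 0 v : Fin (n + 1) → ℝ) ≠ 0 := by
      intro h
      apply hv
      funext k
      have := congrFun h (j.succAbove k)
      simpa using this
    have h := hSig.dotProduct_mulVec_pos hy
    simp only [star_trivial] at h ⊢
    convert h using 1
    conv_rhs => rw [dotProduct, Fin.sum_univ_succAbove _ j]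
    simp only [Fin.insertNth_apply_same, Fin.insertNth_apply_succAbove, zero_mul, zero_add]
    refine Finset.sum_congr rfl fun k _ => ?_
    rw [mulVec_insertNth_apply]
    simp [subMat, mulVec, dotProduct]

lemma inv_mulVec_eq {n : ℕ} {Sig : Matrix (Fin (n + 1)) (Fin (n + 1)) ℝ}
    (hSig : Sig.PosDef) (j : Fin (n + 1)) (hs : schurC Sig j ≠ 0) (x : Fin (n + 1) → ℝ) :
    Sig⁻¹ *ᵥ x = j.insertNth ((x j - condMean Sig j x) / schurC Sig j)
      ((subMat Sig j)⁻¹ *ᵥ (x ∘ j.succAbove)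
        - ((x j - condMean Sig j x) / schurC Sig j) • ((subMat Sig j)⁻¹ *ᵥ colVec Sig j)) := by
  have hsub := subMat_posDef hSig j
  have hsubdet : IsUnit (subMat Sig j).det := isUnit_iff_ne_zero.mpr (ne_of_gt hsub.det_pos)
  have hdet : IsUnit Sig.det := isUnit_iff_ne_zero.mpr (ne_of_gt hSig.det_pos)
  set s := schurC Sig j with hs_def
  set c := (x j - condMean Sig j x) / s with hc_def
  set w := (subMat Sig j)⁻¹ *ᵥ (x ∘ j.succAbove) - c • ((subMat Sig j)⁻¹ *ᵥ colVec Sig j) with hw_def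
  have hmul : Sig *ᵥ j.insertNth c w = x := by
    funext i
    rw [mulVec_insertNth_apply]
    by_cases hij : i = j
    · subst hij
      have hsym : ∀ k, Sig i (i.succAbove k) = colVec Sig i k := by
        intro k
        rw [colVec, ← hSig.1.apply, star_trivial]
      simp only [hsym]
      have : ∑ k, colVec Sig i k * w k = colVec Sig i ⬝ᵥ w := rfl
      rw [this, hw_def, dotProduct_sub, dotProduct_smul]
      have h1 : colVec Sig i ⬝ᵥ (subMat Sig i)⁻¹ *ᵥ (x ∘ i.succAbove) = condMean Sig i x := rfl
      have h2 : colVec Sig i ⬝ᵥ (subMat Sig i)⁻¹ *ᵥ colVec Sig i = Sig i i - s := by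
        rw [hs_def, schurC]; ring
      rw [h1, h2, hc_def]
      simp only [smul_eq_mul]
      linear_combination (x i - condMean Sig i x) * div_self hs
    · obtain ⟨k, rfl⟩ := Fin.exists_succAbove_eq hij
      have : ∑ l, Sig (j.succAbove k) (j.succAbove l) * w l = (subMat Sig j *ᵥ w) k := rfl
      rw [this, hw_def, mulVec_sub, mulVec_smul, mulVec_mulVec, mulVec_mulVec,
        Matrix.mul_nonsing_inv _ hsubdet, one_mulVec, one_mulVec]
      simp [colVec]
      ring
  calc Sig⁻¹ *ᵥ x = Sig⁻¹ *ᵥ (Sig *ᵥ j.insertNth c w) := by rw [hmul]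
    _ = _ := by rw [mulVec_mulVec, Matrix.nonsing_inv_mul _ hdet, one_mulVec]

lemma schurC_pos {n : ℕ} {Sig : Matrix (Fin (n + 1)) (Fin (n + 1)) ℝ}
    (hSig : Sig.PosDef) (j : Fin (n + 1)) : 0 < schurC Sig j := by
  have hsub := subMat_posDef hSig j
  have hsubdet : IsUnit (subMat Sig j).det := isUnit_iff_ne_zero.mpr (ne_of_gt hsub.det_pos)
  set z : Fin (n + 1) → ℝ := j.insertNth 1 (-((subMat Sig j)⁻¹ *ᵥ colVec Sig j)) with hz_def
  have hz : z ≠ 0 := by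
    intro h
    have := congrFun h j
    simp [hz_def] at this
  have h := hSig.dotProduct_mulVec_pos hz
  simp only [star_trivial] at h
  have key : z ⬝ᵥ Sig *ᵥ z = schurC Sig j := by
    rw [dotProduct, Fin.sum_univ_succAbove _ j]
    have hj : (Sig *ᵥ z) j = schurC Sig j := by
      rw [hz_def, mulVec_insertNth_apply]
      have hsym : ∀ k, Sig j (j.succAbove k) = colVec Sig j k := by
        intro k
        rw [colVec, ← hSig.1.apply, star_trivial]
      simp only [hsym]
      have : ∑ k, colVec Sig j k * (-((subMat Sig j)⁻¹ *ᵥ colVec Sig j)) k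
          = -(colVec Sig j ⬝ᵥ (subMat Sig j)⁻¹ *ᵥ colVec Sig j) := by
        simp [dotProduct, Finset.sum_neg_distrib]
      rw [this, schurC]
      ring
    have hk : ∀ k, (Sig *ᵥ z) (j.succAbove k) = 0 := by
      intro k
      rw [hz_def, mulVec_insertNth_apply]
      have : ∑ l, Sig (j.succAbove k) (j.succAbove l) * (-((subMat Sig j)⁻¹ *ᵥ colVec Sig j)) l
          = (subMat Sig j *ᵥ (-((subMat Sig j)⁻¹ *ᵥ colVec Sig j))) k := rfl
      rw [this, mulVec_neg, mulVec_mulVec, Matrix.mul_nonsing_inv _ hsubdet, one_mulVec]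
      simp [colVec]
    simp only [hj, hk]
    simp [hz_def]
  rw [key] at h
  exact h

lemma single_comp_succAbove {n : ℕ} (j : Fin (n + 1)) :
    (Pi.single j 1 : Fin (n + 1) → ℝ) ∘ j.succAbove = 0 := by
  funext k
  simp [Pi.single_eq_of_ne (Fin.succAbove_ne j k)]

lemma condMean_single {n : ℕ} (Sig : Matrix (Fin (n + 1)) (Fin (n + 1)) ℝ) (j : Fin (n + 1)) :
    condMean Sig j (Pi.single j 1) = 0 := by
  rw [condMean, single_comp_succAbove, mulVec_zero, dotProduct_zero]

lemma inv_mulVec_apply_j {n : ℕ} {Sig : Matrix (Fin (n + 1)) (Fin (n + 1)) ℝ}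
    (hSig : Sig.PosDef) (j : Fin (n + 1)) (x : Fin (n + 1) → ℝ) :
    (Sig⁻¹ *ᵥ x) j = (x j - condMean Sig j x) / schurC Sig j := by
  have hs := (schurC_pos hSig j).ne'
  rw [inv_mulVec_eq hSig j hs x, Fin.insertNth_apply_same]

lemma inv_apply_jj {n : ℕ} {Sig : Matrix (Fin (n + 1)) (Fin (n + 1)) ℝ}
    (hSig : Sig.PosDef) (j : Fin (n + 1)) :
    Sig⁻¹ j j = 1 / schurC Sig j := by
  have h := inv_mulVec_apply_j hSig j (Pi.single j 1)
  rw [mulVec_single] at h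
  simpa [condMean_single] using h

lemma stdBasis_mulVec {n : ℕ} (j : Fin (n + 1)) (v : Fin (n + 1) → ℝ) :
    Matrix.single j j (1:ℝ) *ᵥ v = Pi.single j (v j) := by
  funext i
  simp [Matrix.single, mulVec, dotProduct, Pi.single_apply, ite_and, eq_comm]

lemma pert_posDef {n : ℕ} {Sig : Matrix (Fin (n + 1)) (Fin (n + 1)) ℝ}
    (hSig : Sig.PosDef) (j : Fin (n + 1)) {V : ℝ} (hV : 0 < V) :
    (Sig + V • Matrix.single j j (1:ℝ)).PosDef := by
  refine posDef_iff_dotProduct_mulVec.mpr ⟨?_, ?_⟩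
  · show _ᴴ = _
    rw [conjTranspose_add, hSig.1.eq]
    congr 1
    ext a b
    simp [Matrix.single, conjTranspose_apply, and_comm]
  · intro v hv
    have h := hSig.dotProduct_mulVec_pos hv
    simp only [star_trivial] at h ⊢
    rw [add_mulVec, dotProduct_add, smul_mulVec, stdBasis_mulVec, dotProduct_smul,
      dotProduct_single, smul_eq_mul]
    have : 0 ≤ V * (v j * v j) := mul_nonneg hV.le (mul_self_nonneg _)
    linarith

lemma pert_det {n : ℕ} {Sig : Matrix (Fin (n + 1)) (Fin (n + 1)) ℝ}
    (hSig : Sig.PosDef) (j : Fin (n + 1)) (V : ℝ) :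
    (Sig + V • Matrix.single j j (1:ℝ)).det = Sig.det * (1 + V * Sig⁻¹ j j) := by
  have hdet : IsUnit Sig.det := isUnit_iff_ne_zero.mpr (ne_of_gt hSig.det_pos)
  have hfac : Sig + V • Matrix.single j j (1:ℝ)
      = Sig * (1 + V • (Sig⁻¹ * Matrix.single j j (1:ℝ))) := by
    rw [Matrix.mul_add, Matrix.mul_one, Matrix.mul_smul, ← Matrix.mul_assoc,
      Matrix.mul_nonsing_inv _ hdet, Matrix.one_mul]
  rw [hfac, det_mul]
  congr 1
  have hupd : (1 : Matrix (Fin (n+1)) (Fin (n+1)) ℝ) + V • (Sig⁻¹ * Matrix.single j j (1:ℝ))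
      = (1 : Matrix (Fin (n+1)) (Fin (n+1)) ℝ).updateCol j
          (fun i => (1 : Matrix (Fin (n+1)) (Fin (n+1)) ℝ) i j + V * Sig⁻¹ i j) := by
    ext a b
    rw [updateCol_apply]
    by_cases hb : b = j
    · simp [hb, Matrix.mul_apply, Matrix.single, ite_and, Matrix.one_apply]
    · simp only [if_neg hb]
      simp [Matrix.mul_apply, Matrix.single, ite_and, Matrix.one_apply]
      intro h
      exact absurd h.symm hb
  rw [hupd, ← cramer_apply, cramer_one]
  simp [Matrix.one_apply]

lemma pert_quadForm {n : ℕ} {Sig : Matrix (Fin (n + 1)) (Fin (n + 1)) ℝ}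
    (hSig : Sig.PosDef) (j : Fin (n + 1)) {V : ℝ} (hV : 0 < V)
    (h1 : 1 + V * Sig⁻¹ j j ≠ 0) (x : Fin (n + 1) → ℝ) :
    x ⬝ᵥ ((Sig + V • Matrix.single j j (1:ℝ))⁻¹ *ᵥ x)
      = x ⬝ᵥ (Sig⁻¹ *ᵥ x)
        - (V * (Sig⁻¹ *ᵥ x) j / (1 + V * Sig⁻¹ j j)) * (Sig⁻¹ *ᵥ x) j := by
  have hdet : IsUnit Sig.det := isUnit_iff_ne_zero.mpr (ne_of_gt hSig.det_pos)
  have hN := pert_posDef hSig j hV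
  have hNdet : IsUnit (Sig + V • Matrix.single j j (1:ℝ)).det :=
    isUnit_iff_ne_zero.mpr (ne_of_gt hN.det_pos)
  set a := Sig⁻¹ j j with ha_def
  set c := (Sig⁻¹ *ᵥ x) j with hc_def
  set t := V * c / (1 + V * a) with ht_def
  set y' := Sig⁻¹ *ᵥ x - t • (Sig⁻¹ *ᵥ Pi.single j 1) with hy_def
  have hsingle : (Sig⁻¹ *ᵥ Pi.single j (1:ℝ)) = fun i => Sig⁻¹ i j * 1 := mulVec_single _ _ _
  have hmul : (Sig + V • Matrix.single j j (1:ℝ)) *ᵥ y' = x := by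
    rw [add_mulVec, smul_mulVec, stdBasis_mulVec]
    have hSy : Sig *ᵥ y' = x - t • (Pi.single j 1 : Fin (n + 1) → ℝ) := by
      rw [hy_def, mulVec_sub, mulVec_smul, mulVec_mulVec, mulVec_mulVec,
        Matrix.mul_nonsing_inv _ hdet, one_mulVec, one_mulVec]
    have hyj : y' j = c - t * a := by
      rw [hy_def]
      simp only [Pi.sub_apply, Pi.smul_apply, smul_eq_mul, hsingle]
      ring
    rw [hSy, hyj]
    funext i
    by_cases hij : i = j
    · subst hij
      simp only [Pi.add_apply, Pi.sub_apply, Pi.smul_apply, Pi.single_eq_same, smul_eq_mul]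
      rw [ht_def]
      field_simp
      ring
    · simp [Pi.single_eq_of_ne hij]
  have hinv : (Sig + V • Matrix.single j j (1:ℝ))⁻¹ *ᵥ x = y' := by
    calc (Sig + V • Matrix.single j j (1:ℝ))⁻¹ *ᵥ x
        = (Sig + V • Matrix.single j j (1:ℝ))⁻¹ *ᵥ
            ((Sig + V • Matrix.single j j (1:ℝ)) *ᵥ y') := by rw [hmul]
      _ = y' := by rw [mulVec_mulVec, Matrix.nonsing_inv_mul _ hNdet, one_mulVec]
  rw [hinv, hy_def, dotProduct_sub, dotProduct_smul, smul_eq_mul]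
  congr 2
  rw [hsingle, hc_def]
  simp only [dotProduct, mulVec, dotProduct]
  refine Finset.sum_congr rfl fun i _ => ?_
  have := hSig.1.inv.apply i j
  rw [star_trivial] at this
  rw [mul_one, ← this]
  ring

/-- Theorem 3.1 (density-ratio form): the functional relation between the BSD
statistic and the MRD residual. -/
theorem stmt2 {n : ℕ} (hn : 1 ≤ n) (Sig : Matrix (Fin (n + 1)) (Fin (n + 1)) ℝ)
    (hSig : Sig.PosDef) (V p : ℝ) (hV : 0 < V) (hp : p ∈ Set.Ioo (0 : ℝ) 1)
    (j : Fin (n + 1)) (x : Fin (n + 1) → ℝ) :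
    (p * gaussDensity (Sig + V • Matrix.single j j 1) x) /
        ((1 - p) * gaussDensity Sig x) =
      (p / (1 - p)) * Real.sqrt (schurC Sig j / (V + schurC Sig j)) *
        Real.exp ((V / (2 * (V + schurC Sig j))) * (resU Sig j x) ^ 2) := by
  have hs : 0 < schurC Sig j := schurC_pos hSig j
  set s := schurC Sig j with hs_def
  have hVs : 0 < V + s := by linarith
  have hr : (0:ℝ) < (V + s) / s := div_pos hVs hs
  have ha : Sig⁻¹ j j = 1 / s := inv_apply_jj hSig j
  have h1v : 1 + V * Sig⁻¹ j j = (V + s) / s := by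
    rw [ha]; field_simp; ring
  have h1 : 1 + V * Sig⁻¹ j j ≠ 0 := by rw [h1v]; exact hr.ne'
  have hdS : (0:ℝ) < Sig.det := hSig.det_pos
  have hc : (Sig⁻¹ *ᵥ x) j = (x j - condMean Sig j x) / s := inv_mulVec_apply_j hSig j x
  rw [gaussDensity, gaussDensity, pert_det hSig j V, pert_quadForm hSig j hV h1 x, h1v, hc]
  have hD : (Sig.det * ((V + s) / s)) ^ (-(1:ℝ)/2)
      = Sig.det ^ (-(1:ℝ)/2) * Real.sqrt (s / (V + s)) := by
    rw [Real.mul_rpow hdS.le hr.le]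
    congr 1
    have hinv : s / (V + s) = ((V + s) / s)⁻¹ := by rw [inv_div]
    rw [Real.sqrt_eq_rpow, hinv, Real.inv_rpow hr.le, ← Real.rpow_neg hr.le]
    norm_num
  rw [hD]
  set u := condMean Sig j x with hu_def
  set Q := x ⬝ᵥ (Sig⁻¹ *ᵥ x) with hQ_def
  have hU2 : (resU Sig j x) ^ 2 = (x j - u) ^ 2 / s := by
    rw [resU, div_pow, Real.sq_sqrt hs.le]
  have harg : (-(1/2) : ℝ) * (Q - V * ((x j - u) / s) / ((V + s) / s) * ((x j - u) / s))
      = -(1/2) * Q + (V / (2 * (V + s))) * (resU Sig j x) ^ 2 := by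
    rw [hU2]
    field_simp
    ring
  rw [harg, Real.exp_add]
  have hP : (2 * Real.pi) ^ (-((n:ℕ) + 1 : ℝ) / 2) ≠ 0 := by
    positivity
  have hd2 : Sig.det ^ (-(1:ℝ)/2) ≠ 0 := by positivity
  have hE : Real.exp (-(1/2) * Q) ≠ 0 := Real.exp_ne_zero _
  have hp1 : (1:ℝ) - p ≠ 0 := by have := hp.2; linarith
  field_simp
end

section
/- (Lemma 5.4 / Theorem 5.1, core identity.) Let Σ be a symmetric positive definite m×m real matrix, V > 0, and fix an index i. Let b ∈ ℝ^m be the i-th column of the precision matrix Σ⁻¹, with entries b_{1i},…,b_{mi}, and let b_ii be its i-th entry; let E_ii = e_i e_iᵀ. Then for every x ∈ ℝ^m, φ_{Σ + V E_ii}(x) / φ_Σ(x) = (1 + V b_ii)^{−1/2} · exp( (V/(2(1 + V b_ii))) · ( Σ_{j=1}^{m} b_{ji} x_j )² ). -/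
open Matrix MeasureTheory Real Filter

lemma posdef_diag {n : ℕ} {A : Matrix (Fin n) (Fin n) ℝ} (hA : A.PosDef) (i : Fin n) :
    0 < A i i := by
  have hne : (Pi.single i 1 : Fin n → ℝ) ≠ 0 := by
    intro h; simpa using congrFun h i
  have := hA.dotProduct_mulVec_pos hne
  simpa [dotProduct, mulVec, Pi.single_apply, Finset.sum_ite_eq, mul_comm] using this

/-- Lemma 5.4 / Theorem 5.1, core identity: the ratio of the `N(0, Σ + V e_i e_iᵀ)`
density to the `N(0, Σ)` density in terms of the `i`-th column of the precision
matrix `Σ⁻¹`. -/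
theorem stmt7 {m : ℕ} (Sig : Matrix (Fin m) (Fin m) ℝ) (hSig : Sig.PosDef)
    (V : ℝ) (hV : 0 < V) (i : Fin m) (x : Fin m → ℝ) :
    gaussDensity (Sig + V • Matrix.single i i 1) x / gaussDensity Sig x =
      (1 + V * Sig⁻¹ i i) ^ (-(1 : ℝ) / 2) *
        Real.exp ((V / (2 * (1 + V * Sig⁻¹ i i))) * (∑ j, Sig⁻¹ j i * x j) ^ 2) := by
  set B := Sig⁻¹ with hBdef
  set E := Matrix.single i i (1:ℝ) with hEdef
  have hdet : IsUnit Sig.det := isUnit_iff_ne_zero.2 hSig.det_pos.ne'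
  have hSB : Sig * B = 1 := Matrix.mul_nonsing_inv Sig hdet
  have hBpd : B.PosDef := hSig.inv
  have hb : 0 < B i i := posdef_diag hBpd i
  have hden : 0 < 1 + V * B i i := by positivity
  set c := V / (1 + V * B i i) with hcdef
  have hc : c * (1 + V * B i i) = V := div_mul_cancel₀ V hden.ne'
  have hEBE : E * B * E = (B i i) • E := by
    ext j k
    simp [hEdef, Matrix.mul_apply, Matrix.single, ite_and, mul_comm]
    split <;> split <;> simp_all
  -- factorization for the determinant
  have hfac : Sig + V • E = Sig * (1 + V • (B * E)) := by
    rw [Matrix.mul_add, Matrix.mul_one, Matrix.mul_smul, ← Matrix.mul_assoc, hSB, Matrix.one_mul]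
  have hcol : Matrix.replicateCol Unit (fun j => V * B j i) *
      Matrix.replicateRow Unit (fun j => if j = i then (1:ℝ) else 0) = V • (B * E) := by
    ext j k
    rcases eq_or_ne k i with rfl|h
    · simp [Matrix.mul_apply, hEdef, Matrix.single, mul_comm]
    · simp [Matrix.mul_apply, hEdef, Matrix.single, h, Ne.symm h]
  have hdetM : (Sig + V • E).det = Sig.det * (1 + V * B i i) := by
    rw [hfac, Matrix.det_mul, ← hcol, Matrix.det_one_add_replicateCol_mul_replicateRow]
    simp [dotProduct]
  -- the inverse
  set N := B - c • (B * E * B) with hNdef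
  have hMN : (Sig + V • E) * N = 1 := by
    have h1 : Sig * (B * E * B) = E * B := by
      rw [← Matrix.mul_assoc, ← Matrix.mul_assoc, hSB, Matrix.one_mul]
    have h2 : E * (B * E * B) = (B i i) • (E * B) := by
      have hassoc : E * (B * E * B) = (E * B * E) * B := by
        simp only [Matrix.mul_assoc]
      rw [hassoc, hEBE, Matrix.smul_mul]
    simp only [hNdef, Matrix.mul_sub, Matrix.add_mul, Matrix.mul_smul, Matrix.smul_mul,
      hSB, h1, h2]
    match_scalars <;> field_simp <;> linear_combination -hc
  have hinv : (Sig + V • E)⁻¹ = N := Matrix.inv_eq_right_inv hMN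
  have hBsym : ∀ j k, B j k = B k j := by
    intro j k
    have h := hBpd.isHermitian
    have := congrFun (congrFun h k) j
    simpa [Matrix.conjTranspose_apply] using this
  set s := ∑ j, B j i * x j with hsdef
  have hP : ∀ j k, (B * E * B) j k = B j i * B i k := by
    intro j k
    simp [Matrix.mul_apply, hEdef, Matrix.single, ite_and, mul_comm]
  have hsum2 : ∑ k, B i k * x k = s := by
    rw [hsdef]; exact Finset.sum_congr rfl fun k _ => by rw [hBsym i k]
  have hquad : x ⬝ᵥ ((B * E * B) *ᵥ x) = s * s := by
    simp only [dotProduct, mulVec, hP]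
    calc ∑ j, x j * ∑ k, B j i * B i k * x k
        = ∑ j, (x j * B j i) * ∑ k, B i k * x k := by
          refine Finset.sum_congr rfl fun j _ => ?_
          rw [Finset.mul_sum, Finset.mul_sum]
          exact Finset.sum_congr rfl fun k _ => by ring
      _ = s * s := by
          rw [hsum2, ← Finset.sum_mul, hsdef]
          congr 1
          exact Finset.sum_congr rfl fun j _ => mul_comm _ _
  have hqx : x ⬝ᵥ ((Sig + V • E)⁻¹ *ᵥ x) = x ⬝ᵥ (B *ᵥ x) - c * (s * s) := by
    rw [hinv, hNdef, Matrix.sub_mulVec, Matrix.smul_mulVec, dotProduct_sub,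
      dotProduct_smul, hquad]
    simp
  simp only [gaussDensity, hdetM, hqx, Real.mul_rpow hSig.det_pos.le hden.le]
  have hexp : -(1/2 : ℝ) * (x ⬝ᵥ (B *ᵥ x) - c * (s * s)) =
      (V / (2 * (1 + V * B i i))) * s ^ 2 + (-(1/2) * (x ⬝ᵥ (B *ᵥ x))) := by
    rw [hcdef]; field_simp; ring
  rw [← hBdef, hexp, Real.exp_add]
  have h1 : (0:ℝ) < (2 * Real.pi) ^ (-(m:ℝ)/2) := Real.rpow_pos_of_pos (by positivity) _
  have h2 : (0:ℝ) < Sig.det ^ (-(1:ℝ)/2) := Real.rpow_pos_of_pos hSig.det_pos _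
  have h3 : (0:ℝ) < Real.exp (-(1/2 : ℝ) * (x ⬝ᵥ (B *ᵥ x))) := Real.exp_pos _
  field_simp
  exact mul_inv_cancel₀ (Real.rpow_pos_of_pos hSig.det_pos _).ne'
end

section
/- Let p ∈ (0,1), V > 0, σ ∈ (−1,1), γ > 0 and let m ≥ 2 be an integer. For (r,s) ∈ {0,1}², let C_{rs} be the 2×2 matrix with diagonal entries 1 + rV, 1 + sV and off-diagonal entries σ, and let f(z) = Σ_{(r,s) ∈ {0,1}²} p^{r+s} (1−p)^{2−r−s} φ_{C_{rs}}(z) be the bivariate mixture density of a pair (X_j, X_{j'}) of test statistics with correlation parameter σ. Then ∫_{ℝ²} cos(√(2γ log m) z₁) cos(√(2γ log m) z₂) f(z) dz − ( ∫_ℝ cos(√(2γ log m) x) [(1−p) g₁(x) + p g_{1+V}(x)] dx )² = (m^{−2γ}/2) · ( m^{−γσ} − m^{γσ} )² · ( (1−p) + p m^{−Vγ} )², where g_s(x) = (2πs)^{−1/2} exp(−x²/(2s)); that is, Cov( cos(√(2γ log m) X_j), cos(√(2γ log m) X_{j'}) ) equals the stated expression. -/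
open Matrix MeasureTheory Real Filter

/-- Joint density of a pair of test statistics with correlation parameter `σ` in the
two-groups Gaussian mixture model. -/
noncomputable def bivMix (p V σ : ℝ) (z : Fin 2 → ℝ) : ℝ :=
  ∑ r : Bool, ∑ s : Bool,
    p ^ (r.toNat + s.toNat) * (1 - p) ^ (2 - r.toNat - s.toNat) *
      gaussDensity
        (Matrix.of ![![1 + (r.toNat : ℝ) * V, σ], ![σ, 1 + (s.toNat : ℝ) * V]]) z

/-- Density of the `N(0, s)` distribution on `ℝ`. -/
noncomputable def gDens (s x : ℝ) : ℝ :=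
  (2 * Real.pi * s) ^ (-(1 : ℝ) / 2) * Real.exp (-x ^ 2 / (2 * s))

section aux

lemma cos_gauss_cexp (b : ℝ) (hb : 0 < b) (u θ : ℝ) :
    ∫ x : ℝ, Real.cos (u * x + θ) * Real.exp (-b * x ^ 2)
      = Real.sqrt (π / b) * Real.cos θ * Real.exp (-u ^ 2 / (4 * b)) := by
  have hint : Integrable (fun x : ℝ => Complex.exp (-(b:ℂ) * x ^ 2 + (Complex.I * u) * x + Complex.I * θ)) :=
    integrable_cexp_quadratic (by simpa using hb) _ _
  have key : (∫ x : ℝ, Complex.exp (-(b:ℂ) * x ^ 2 + (Complex.I * u) * x + Complex.I * θ))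
      = Complex.exp (Complex.I * θ) * ((π / b : ℂ) ^ (1/2 : ℂ) * Complex.exp (-(u:ℂ) ^ 2 / (4 * b))) := by
    rw [← fourierIntegral_gaussian (by simpa using hb) (u : ℂ), ← integral_const_mul]
    congr 1 with x
    rw [← Complex.exp_add, ← Complex.exp_add]
    ring_nf
  have hre : ∀ x : ℝ, (Complex.exp (-(b:ℂ) * x ^ 2 + (Complex.I * u) * x + Complex.I * θ)).re
      = Real.cos (u * x + θ) * Real.exp (-b * x ^ 2) := by
    intro x
    have h : -(b:ℂ) * x ^ 2 + (Complex.I * u) * x + Complex.I * θ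
        = ((u * x + θ : ℝ) : ℂ) * Complex.I + ((-b * x ^ 2 : ℝ) : ℂ) := by push_cast; ring
    rw [h, Complex.exp_add, Complex.mul_re, Complex.exp_ofReal_mul_I_re,
      Complex.exp_ofReal_mul_I_im, ← Complex.ofReal_exp, Complex.ofReal_re, Complex.ofReal_im]
    ring
  calc ∫ x : ℝ, Real.cos (u * x + θ) * Real.exp (-b * x ^ 2)
      = (∫ x : ℝ, Complex.exp (-(b:ℂ) * x ^ 2 + (Complex.I * u) * x + Complex.I * θ)).re := by
        rw [show (∫ x : ℝ, Complex.exp (-(b:ℂ) * x ^ 2 + (Complex.I * u) * x + Complex.I * θ)).re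
            = Complex.reCLM (∫ x : ℝ, Complex.exp (-(b:ℂ) * x ^ 2 + (Complex.I * u) * x + Complex.I * θ)) from rfl,
          ← Complex.reCLM.integral_comp_comm hint]
        simp only [Complex.reCLM_apply, hre]
    _ = Real.sqrt (π / b) * Real.cos θ * Real.exp (-u ^ 2 / (4 * b)) := by
        rw [key]
        have h0 : ((π:ℂ)) / ((b:ℂ)) = ((π / b : ℝ) : ℂ) := by push_cast; ring
        have h1 : ((π / b : ℝ) : ℂ) ^ (1/2 : ℂ) = ((Real.sqrt (π / b) : ℝ) : ℂ) := by
          have h12 : (1/2 : ℂ) = ((1/2 : ℝ) : ℂ) := by norm_num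
          rw [h12, ← Complex.ofReal_cpow (by positivity : (0:ℝ) ≤ π / b),
            Real.sqrt_eq_rpow]
        have h2 : (-(u:ℂ) ^ 2 / (4 * b)) = ((-u ^ 2 / (4 * b) : ℝ) : ℂ) := by push_cast; ring
        have h3 : Complex.I * θ = ((θ:ℝ):ℂ) * Complex.I := by ring
        rw [h0, h1, h2, h3, ← Complex.ofReal_exp, ← Complex.ofReal_mul, Complex.mul_re,
          Complex.exp_ofReal_mul_I_re, Complex.exp_ofReal_mul_I_im,
          Complex.ofReal_re, Complex.ofReal_im]
        ring

lemma gDens_eq {s : ℝ} (hs : 0 < s) (x : ℝ) :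
    gDens s x = (2 * π * s) ^ (-(1 : ℝ) / 2) * Real.exp (-(1/(2*s)) * x ^ 2) := by
  unfold gDens
  congr 2
  field_simp

lemma integrable_gDens {s : ℝ} (hs : 0 < s) : Integrable (gDens s) := by
  have hb : 0 < 1/(2*s) := by positivity
  have := (integrable_exp_neg_mul_sq hb).const_mul ((2 * π * s) ^ (-(1 : ℝ) / 2))
  refine this.congr (Filter.Eventually.of_forall fun x => ?_)
  exact (gDens_eq hs x).symm

lemma integrable_cos_gDens {s : ℝ} (hs : 0 < s) (u θ : ℝ) :
    Integrable (fun x => Real.cos (u * x + θ) * gDens s x) := by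
  refine (integrable_gDens hs).bdd_mul (c := 1) ?_ (Filter.Eventually.of_forall fun x => by
    simpa using Real.abs_cos_le_one (u * x + θ))
  exact (Real.continuous_cos.comp (by continuity)).aestronglyMeasurable

lemma integral_cos_gDens {s : ℝ} (hs : 0 < s) (u θ : ℝ) :
    ∫ x : ℝ, Real.cos (u * x + θ) * gDens s x
      = Real.cos θ * Real.exp (-(s * u ^ 2) / 2) := by
  have hb : 0 < 1/(2*s) := by positivity
  have h1 : ∫ x : ℝ, Real.cos (u * x + θ) * gDens s x
      = (2 * π * s) ^ (-(1 : ℝ) / 2) * ∫ x : ℝ, Real.cos (u * x + θ) * Real.exp (-(1/(2*s)) * x ^ 2) := by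
    rw [← integral_const_mul]
    congr 1 with x
    rw [gDens_eq hs x]; ring
  rw [h1, cos_gauss_cexp _ hb]
  have h2 : Real.sqrt (π / (1/(2*s))) = Real.sqrt (2 * π * s) := by
    congr 1; field_simp
  have h3 : -u ^ 2 / (4 * (1/(2*s))) = -(s * u ^ 2) / 2 := by
    field_simp; ring
  rw [h2, h3]
  have h4 : (2 * π * s) ^ (-(1 : ℝ) / 2) * Real.sqrt (2 * π * s) = 1 := by
    have hx : 0 < 2 * π * s := by positivity
    rw [Real.sqrt_eq_rpow, ← Real.rpow_add hx]
    norm_num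
  calc (2 * π * s) ^ (-(1 : ℝ) / 2) * (Real.sqrt (2 * π * s) * Real.cos θ * Real.exp (-(s * u^2) / 2))
      = ((2 * π * s) ^ (-(1 : ℝ) / 2) * Real.sqrt (2 * π * s)) * (Real.cos θ * Real.exp (-(s * u^2) / 2)) := by ring
    _ = Real.cos θ * Real.exp (-(s * u ^ 2) / 2) := by rw [h4, one_mul]

lemma det_C (a b σ : ℝ) : (Matrix.of ![![a, σ], ![σ, b]]).det = a * b - σ * σ := by
  simp [Matrix.det_fin_two, Matrix.of_apply]

lemma inv_C {a b σ : ℝ} (hd : 0 < a * b - σ * σ) :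
    (Matrix.of ![![a, σ], ![σ, b]])⁻¹
      = (a * b - σ * σ)⁻¹ • Matrix.of ![![b, -σ], ![-σ, a]] := by
  have hne : a * b - σ ^ 2 ≠ 0 := (by nlinarith : (0:ℝ) < a * b - σ ^ 2).ne'
  have hne2 : -σ ^ 2 + a * b ≠ 0 := (by nlinarith : (0:ℝ) < -σ ^ 2 + a * b).ne'
  apply Matrix.inv_eq_right_inv
  ext i j
  fin_cases i <;> fin_cases j <;>
    simp [Matrix.mul_apply, Fin.sum_univ_two, Matrix.of_apply, Matrix.one_apply] <;>
    field_simp <;> ring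

lemma quad_C {a b σ : ℝ} (ha : 0 < a) (hd : 0 < a * b - σ * σ) (z : Fin 2 → ℝ) :
    z ⬝ᵥ ((Matrix.of ![![a, σ], ![σ, b]])⁻¹ *ᵥ z)
      = (b * z 0 ^ 2 - 2 * σ * z 0 * z 1 + a * z 1 ^ 2) / (a * b - σ * σ) := by
  have hne : b * a - σ ^ 2 ≠ 0 := (by nlinarith : (0:ℝ) < b * a - σ ^ 2).ne'
  rw [inv_C hd]
  simp [Matrix.mulVec, dotProduct, Fin.sum_univ_two, Matrix.of_apply]
  field_simp
  ring

lemma gauss_factor {a b σ : ℝ} (ha : 0 < a) (hd : 0 < a * b - σ * σ) (z : Fin 2 → ℝ) :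
    gaussDensity (Matrix.of ![![a, σ], ![σ, b]]) z
      = gDens a (z 0) * gDens ((a * b - σ * σ) / a) (z 1 - (σ / a) * z 0) := by
  have hv : 0 < (a * b - σ * σ) / a := by positivity
  unfold gaussDensity gDens
  rw [det_C, quad_C ha hd]
  have hconst : (2 * π) ^ (-(2 : ℝ) / 2) * (a * b - σ * σ) ^ (-(1:ℝ) / 2)
      = (2 * π * a) ^ (-(1:ℝ) / 2) * (2 * π * ((a * b - σ * σ) / a)) ^ (-(1:ℝ) / 2) := by
    have h1 : 2 * π * a * (2 * π * ((a * b - σ * σ) / a)) = (2*π)^2 * (a * b - σ * σ) := by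
      field_simp
    have e1 : ∀ x : ℝ, 0 < x → x ^ (-(1:ℝ)/2) = (Real.sqrt x)⁻¹ := fun x hx => by
      rw [Real.sqrt_eq_rpow, ← Real.rpow_neg hx.le]; norm_num
    have e2 : (2*π:ℝ) ^ (-(2:ℝ)/2) = (2*π)⁻¹ := by
      rw [show (-(2:ℝ)/2) = (-1 : ℝ) by norm_num, Real.rpow_neg_one]
    rw [e2, e1 _ (by positivity), e1 _ (by positivity), e1 _ (by positivity),
      ← mul_inv, ← mul_inv]
    congr 1
    symm
    rw [← Real.sqrt_mul (by positivity), h1, Real.sqrt_mul (by positivity),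
      Real.sqrt_sq (by positivity)]
  have hexp : Real.exp (-(1/2) * ((b * z 0 ^ 2 - 2 * σ * z 0 * z 1 + a * z 1 ^ 2) / (a * b - σ * σ)))
      = Real.exp (-(z 0) ^ 2 / (2 * a)) * Real.exp (-(z 1 - σ / a * z 0) ^ 2 / (2 * ((a * b - σ * σ) / a))) := by
    have hne : a * b - σ ^ 2 ≠ 0 := (by nlinarith : (0:ℝ) < a * b - σ ^ 2).ne'
    rw [← Real.exp_add]
    congr 1
    field_simp
    linear_combination (-(z 0) ^ 2) * mul_inv_cancel₀ hne
  push_cast at hconst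
  calc (2 * π) ^ (-(2:ℝ) / 2) * (a * b - σ * σ) ^ (-(1:ℝ) / 2) *
        Real.exp (-(1/2) * ((b * z 0 ^ 2 - 2 * σ * z 0 * z 1 + a * z 1 ^ 2) / (a * b - σ * σ)))
      = ((2 * π * a) ^ (-(1:ℝ) / 2) * Real.exp (-(z 0) ^ 2 / (2 * a))) *
        ((2 * π * ((a * b - σ * σ) / a)) ^ (-(1:ℝ) / 2) *
          Real.exp (-(z 1 - σ / a * z 0) ^ 2 / (2 * ((a * b - σ * σ) / a)))) := by
        rw [hconst, hexp]; ring
    _ = _ := rfl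

noncomputable def shearEquiv (c : ℝ) : (ℝ × ℝ) ≃ᵐ (ℝ × ℝ) where
  toFun p := (p.1, p.2 + c * p.1)
  invFun p := (p.1, p.2 - c * p.1)
  left_inv p := by simp
  right_inv p := by simp
  measurable_toFun :=
    measurable_fst.prodMk (measurable_snd.add (measurable_fst.const_mul c))
  measurable_invFun :=
    measurable_fst.prodMk (measurable_snd.sub (measurable_fst.const_mul c))

lemma shearEquiv_apply (c : ℝ) (p : ℝ × ℝ) : shearEquiv c p = (p.1, p.2 + c * p.1) := rfl

lemma shear_mp (c : ℝ) : MeasurePreserving (shearEquiv c) (volume : Measure (ℝ × ℝ)) volume := by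
  have : MeasurePreserving (fun p : ℝ × ℝ => (p.1, p.2 + c * p.1))
      ((volume : Measure ℝ).prod volume) ((volume : Measure ℝ).prod volume) :=
    MeasurePreserving.skew_product (g := fun x y => y + c * x) (MeasurePreserving.id _)
      (by fun_prop)
      (Filter.Eventually.of_forall fun x => map_add_right_eq_self volume (c * x))
  exact this

lemma gDens_nonneg {s : ℝ} (hs : 0 < s) (x : ℝ) : 0 ≤ gDens s x := by
  unfold gDens
  positivity

lemma gDens_continuous (s : ℝ) : Continuous (gDens s) := by
  unfold gDens
  fun_prop

lemma integrable_H {a v : ℝ} (t c : ℝ) (ha : 0 < a) (hv : 0 < v) :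
    Integrable (fun q : ℝ × ℝ =>
      (Real.cos (t * q.1) * gDens a q.1) * (Real.cos (t * q.2 + t * c * q.1) * gDens v q.2))
      ((volume : Measure ℝ).prod volume) := by
  have hbase : Integrable (fun q : ℝ × ℝ => gDens a q.1 * gDens v q.2)
      ((volume : Measure ℝ).prod volume) :=
    (integrable_gDens ha).mul_prod (integrable_gDens hv)
  refine hbase.mono' ?_ (Filter.Eventually.of_forall fun q => ?_)
  · apply Continuous.aestronglyMeasurable
    exact ((Real.continuous_cos.comp (continuous_const.mul continuous_fst)).mul
        ((gDens_continuous a).comp continuous_fst)).mul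
      ((Real.continuous_cos.comp ((continuous_const.mul continuous_snd).add
        ((continuous_const.mul continuous_fst)))).mul
        ((gDens_continuous v).comp continuous_snd))
  · have h1 : |Real.cos (t * q.1)| ≤ 1 := Real.abs_cos_le_one _
    have h2 : |Real.cos (t * q.2 + t * c * q.1)| ≤ 1 := Real.abs_cos_le_one _
    have hga := gDens_nonneg ha q.1
    have hgv := gDens_nonneg hv q.2
    rw [Real.norm_eq_abs, abs_mul, abs_mul, abs_mul, abs_of_nonneg hga, abs_of_nonneg hgv]
    calc |Real.cos (t * q.1)| * gDens a q.1 * (|Real.cos (t * q.2 + t * c * q.1)| * gDens v q.2)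
        ≤ 1 * gDens a q.1 * (1 * gDens v q.2) := by
          apply mul_le_mul
          · exact mul_le_mul_of_nonneg_right h1 hga
          · exact mul_le_mul_of_nonneg_right h2 hgv
          · positivity
          · positivity
      _ = gDens a q.1 * gDens v q.2 := by ring

lemma twoD {a b σ : ℝ} (t : ℝ) (ha : 0 < a) (hb : 0 < b) (hd : 0 < a * b - σ * σ) :
    ∫ z : Fin 2 → ℝ, Real.cos (t * z 0) * Real.cos (t * z 1) *
        gaussDensity (Matrix.of ![![a, σ], ![σ, b]]) z
      = (Real.exp (-((a + b + 2*σ) * t^2) / 2) + Real.exp (-((a + b - 2*σ) * t^2) / 2)) / 2 := by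
  have ha' : a ≠ 0 := ne_of_gt ha
  set v := (a * b - σ * σ) / a with hvdef
  set c := σ / a with hcdef
  have hv : 0 < v := by rw [hvdef]; positivity
  have step1 : (∫ z : Fin 2 → ℝ, Real.cos (t * z 0) * Real.cos (t * z 1) *
        gaussDensity (Matrix.of ![![a, σ], ![σ, b]]) z)
      = ∫ p : ℝ × ℝ, Real.cos (t * p.1) * Real.cos (t * p.2) *
          (gDens a p.1 * gDens v (p.2 - c * p.1)) := by
    rw [← ((volume_preserving_finTwoArrow ℝ).symm MeasurableEquiv.finTwoArrow).integral_comp'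
      (fun z : Fin 2 → ℝ => Real.cos (t * z 0) * Real.cos (t * z 1) *
        gaussDensity (Matrix.of ![![a, σ], ![σ, b]]) z)]
    congr 1 with p
    rw [gauss_factor ha hd]
    simp [MeasurableEquiv.finTwoArrow_symm_apply, hvdef, hcdef]
  have step2 : (∫ p : ℝ × ℝ, Real.cos (t * p.1) * Real.cos (t * p.2) *
          (gDens a p.1 * gDens v (p.2 - c * p.1)))
      = ∫ q : ℝ × ℝ, (Real.cos (t * q.1) * gDens a q.1) *
          (Real.cos (t * q.2 + t * c * q.1) * gDens v q.2) := by
    rw [← (shear_mp c).integral_comp' (fun p : ℝ × ℝ => Real.cos (t * p.1) * Real.cos (t * p.2) *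
          (gDens a p.1 * gDens v (p.2 - c * p.1)))]
    congr 1 with q
    simp only [shearEquiv_apply]
    have h2 : q.2 + c * q.1 - c * q.1 = q.2 := by ring
    rw [h2, show t * (q.2 + c * q.1) = t * q.2 + t * c * q.1 from by ring]
    ring
  have step3 : (∫ q : ℝ × ℝ, (Real.cos (t * q.1) * gDens a q.1) *
          (Real.cos (t * q.2 + t * c * q.1) * gDens v q.2))
      = ∫ x : ℝ, (Real.cos (t * x) * gDens a x) *
          (Real.cos (t * c * x) * Real.exp (-(v * t^2)/2)) := by
    rw [Measure.volume_eq_prod, integral_prod _ (integrable_H t c ha hv)]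
    congr 1 with x
    have hrfl : (∫ y : ℝ, Real.cos (t * (x, y).1) * gDens a (x, y).1 *
          (Real.cos (t * (x, y).2 + t * c * (x, y).1) * gDens v (x, y).2))
        = ∫ y : ℝ, Real.cos (t * x) * gDens a x *
            (Real.cos (t * y + t * c * x) * gDens v y) := rfl
    rw [hrfl]
    have hrfl2 : (∫ y : ℝ, Real.cos (t * x) * gDens a x *
          (Real.cos (t * y + t * c * x) * gDens v y))
        = ∫ y : ℝ, (Real.cos (t * x) * gDens a x) *
            (Real.cos (t * y + t * c * x) * gDens v y) := rfl
    rw [hrfl2, integral_const_mul, integral_cos_gDens hv t (t*c*x)]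
  have step4 : (∫ x : ℝ, (Real.cos (t * x) * gDens a x) *
          (Real.cos (t * c * x) * Real.exp (-(v * t^2)/2)))
      = Real.exp (-(v * t^2)/2) *
          ((Real.cos 0 * Real.exp (-(a * (t + t*c)^2)/2)
            + Real.cos 0 * Real.exp (-(a * (t - t*c)^2)/2)) / 2) := by
    have hptw : ∀ x : ℝ, (Real.cos (t * x) * gDens a x) *
          (Real.cos (t * c * x) * Real.exp (-(v * t^2)/2))
        = Real.exp (-(v * t^2)/2) * ((Real.cos ((t + t*c) * x + 0) * gDens a x
            + Real.cos ((t - t*c) * x + 0) * gDens a x) / 2) := by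
      intro x
      rw [add_zero, add_zero, show (t + t*c)*x = t*x + t*c*x from by ring,
        show (t - t*c)*x = t*x - t*c*x from by ring, Real.cos_add, Real.cos_sub]
      ring
    simp only [hptw]
    rw [integral_const_mul]
    congr 1
    rw [integral_div, integral_add (integrable_cos_gDens ha _ 0) (integrable_cos_gDens ha _ 0),
      integral_cos_gDens ha (t + t*c) 0, integral_cos_gDens ha (t - t*c) 0]
  rw [step1, step2, step3, step4, Real.cos_zero, one_mul, one_mul]
  have key1 : Real.exp (-(v * t^2)/2) * Real.exp (-(a * (t + t*c)^2)/2)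
      = Real.exp (-((a + b + 2*σ) * t^2)/2) := by
    rw [← Real.exp_add]
    congr 1
    rw [hvdef, hcdef]
    field_simp
    ring
  have key2 : Real.exp (-(v * t^2)/2) * Real.exp (-(a * (t - t*c)^2)/2)
      = Real.exp (-((a + b - 2*σ) * t^2)/2) := by
    rw [← Real.exp_add]
    congr 1
    rw [hvdef, hcdef]
    field_simp
    ring
  calc Real.exp (-(v * t^2)/2) *
        ((Real.exp (-(a * (t + t*c)^2)/2) + Real.exp (-(a * (t - t*c)^2)/2)) / 2)
      = (Real.exp (-(v * t^2)/2) * Real.exp (-(a * (t + t*c)^2)/2)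
          + Real.exp (-(v * t^2)/2) * Real.exp (-(a * (t - t*c)^2)/2)) / 2 := by ring
    _ = _ := by rw [key1, key2]

lemma integrable_term {a b σ : ℝ} (t : ℝ) (ha : 0 < a) (hd : 0 < a * b - σ * σ) :
    Integrable (fun z : Fin 2 → ℝ => Real.cos (t * z 0) * Real.cos (t * z 1) *
      gaussDensity (Matrix.of ![![a, σ], ![σ, b]]) z) := by
  have ha' : a ≠ 0 := ne_of_gt ha
  set v := (a * b - σ * σ) / a with hvdef
  set c := σ / a with hcdef
  have hv : 0 < v := by rw [hvdef]; positivity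
  rw [← ((volume_preserving_finTwoArrow ℝ).symm MeasurableEquiv.finTwoArrow).integrable_comp_emb
    (MeasurableEquiv.finTwoArrow.symm.measurableEmbedding)]
  rw [← (shear_mp c).integrable_comp_emb ((shearEquiv c).measurableEmbedding)]
  have key := integrable_H (a := a) (v := v) t c ha hv
  rw [← Measure.volume_eq_prod] at key
  refine key.congr (Filter.Eventually.of_forall fun q => ?_)
  show (Real.cos (t * q.1) * gDens a q.1) * (Real.cos (t * q.2 + t * c * q.1) * gDens v q.2)
      = Real.cos (t * (MeasurableEquiv.finTwoArrow.symm (shearEquiv c q)) 0) *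
          Real.cos (t * (MeasurableEquiv.finTwoArrow.symm (shearEquiv c q)) 1) *
          gaussDensity (Matrix.of ![![a, σ], ![σ, b]]) (MeasurableEquiv.finTwoArrow.symm (shearEquiv c q))
  rw [gauss_factor ha hd]
  simp only [shearEquiv_apply, MeasurableEquiv.finTwoArrow_symm_apply, Matrix.cons_val_zero,
    Matrix.cons_val_one, Matrix.head_cons, Fin.cons_zero, Fin.cons_one]
  have h2 : q.2 + c * q.1 - c * q.1 = q.2 := by ring
  rw [h2, show t * (q.2 + c * q.1) = t * q.2 + t * c * q.1 from by ring]
  ring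

end aux

/-- The covariance of the cosines of two test statistics with correlation parameter
`σ` in the two-groups model equals
`(m^{−2γ}/2) (m^{−γσ} − m^{γσ})² ((1−p) + p m^{−Vγ})²`. -/
theorem stmt13 (p V σ γ : ℝ) (hp : p ∈ Set.Ioo (0 : ℝ) 1) (hV : 0 < V)
    (hσ : σ ∈ Set.Ioo (-1 : ℝ) 1) (hγ : 0 < γ) (m : ℕ) (hm : 2 ≤ m) :
    (∫ z : Fin 2 → ℝ,
        Real.cos (Real.sqrt (2 * γ * Real.log m) * z 0) *
          Real.cos (Real.sqrt (2 * γ * Real.log m) * z 1) * bivMix p V σ z) -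
      (∫ x : ℝ, Real.cos (Real.sqrt (2 * γ * Real.log m) * x) *
        ((1 - p) * gDens 1 x + p * gDens (1 + V) x)) ^ 2 =
      ((m : ℝ) ^ (-(2 * γ)) / 2) * ((m : ℝ) ^ (-(γ * σ)) - (m : ℝ) ^ (γ * σ)) ^ 2 *
        ((1 - p) + p * (m : ℝ) ^ (-(V * γ))) ^ 2 := by
  obtain ⟨hp0, hp1⟩ := hp
  obtain ⟨hσ1, hσ2⟩ := hσ
  have hm0 : (0:ℝ) < m := by exact_mod_cast (by omega : 0 < m)
  have hm1 : (1:ℝ) ≤ m := by exact_mod_cast (by omega : 1 ≤ m)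
  set L := Real.log m with hLdef
  have hL : 0 ≤ L := Real.log_nonneg hm1
  set t := Real.sqrt (2 * γ * L) with htdef
  have ht2 : t ^ 2 = 2 * γ * L := Real.sq_sqrt (by positivity)
  have hσsq : σ * σ < 1 := by nlinarith
  have hent : ∀ r : Bool, (1:ℝ) ≤ 1 + (r.toNat:ℝ) * V := fun r => by
    have h0 : (0:ℝ) ≤ (r.toNat:ℝ) := Nat.cast_nonneg _
    nlinarith
  have hpos : ∀ r : Bool, (0:ℝ) < 1 + (r.toNat:ℝ) * V := fun r => lt_of_lt_of_le one_pos (hent r)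
  have hdet : ∀ r s : Bool, 0 < (1 + (r.toNat:ℝ) * V) * (1 + (s.toNat:ℝ) * V) - σ * σ :=
    fun r s => by nlinarith [hent r, hent s]
  have hbiv : (∫ z : Fin 2 → ℝ, Real.cos (t * z 0) * Real.cos (t * z 1) * bivMix p V σ z)
      = ∑ r : Bool, ∑ s : Bool, p ^ (r.toNat + s.toNat) * (1 - p) ^ (2 - r.toNat - s.toNat) *
          ((Real.exp (-((1 + (r.toNat:ℝ) * V + (1 + (s.toNat:ℝ) * V) + 2*σ) * t^2) / 2)
            + Real.exp (-((1 + (r.toNat:ℝ) * V + (1 + (s.toNat:ℝ) * V) - 2*σ) * t^2) / 2)) / 2) := by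
    have hpt : ∀ z : Fin 2 → ℝ, Real.cos (t * z 0) * Real.cos (t * z 1) * bivMix p V σ z
        = ∑ r : Bool, ∑ s : Bool, p ^ (r.toNat + s.toNat) * (1 - p) ^ (2 - r.toNat - s.toNat) *
            (Real.cos (t * z 0) * Real.cos (t * z 1) *
              gaussDensity (Matrix.of ![![1 + (r.toNat:ℝ) * V, σ], ![σ, 1 + (s.toNat:ℝ) * V]]) z) := by
      intro z
      unfold bivMix
      rw [Finset.mul_sum]
      refine Finset.sum_congr rfl fun r _ => ?_
      rw [Finset.mul_sum]
      exact Finset.sum_congr rfl fun s _ => by ring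
    calc (∫ z : Fin 2 → ℝ, Real.cos (t * z 0) * Real.cos (t * z 1) * bivMix p V σ z)
        = ∫ z : Fin 2 → ℝ, ∑ r : Bool, ∑ s : Bool,
            p ^ (r.toNat + s.toNat) * (1 - p) ^ (2 - r.toNat - s.toNat) *
              (Real.cos (t * z 0) * Real.cos (t * z 1) *
                gaussDensity (Matrix.of ![![1 + (r.toNat:ℝ) * V, σ], ![σ, 1 + (s.toNat:ℝ) * V]]) z) := by
          simp only [hpt]
      _ = ∑ r : Bool, ∫ z : Fin 2 → ℝ, ∑ s : Bool,
            p ^ (r.toNat + s.toNat) * (1 - p) ^ (2 - r.toNat - s.toNat) *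
              (Real.cos (t * z 0) * Real.cos (t * z 1) *
                gaussDensity (Matrix.of ![![1 + (r.toNat:ℝ) * V, σ], ![σ, 1 + (s.toNat:ℝ) * V]]) z) := by
          refine integral_finset_sum _ fun r _ => integrable_finset_sum _ fun s _ => ?_
          exact (integrable_term t (hpos r) (hdet r s)).const_mul _
      _ = ∑ r : Bool, ∑ s : Bool, ∫ z : Fin 2 → ℝ,
            p ^ (r.toNat + s.toNat) * (1 - p) ^ (2 - r.toNat - s.toNat) *
              (Real.cos (t * z 0) * Real.cos (t * z 1) *
                gaussDensity (Matrix.of ![![1 + (r.toNat:ℝ) * V, σ], ![σ, 1 + (s.toNat:ℝ) * V]]) z) := by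
          refine Finset.sum_congr rfl fun r _ => integral_finset_sum _ fun s _ => ?_
          exact (integrable_term t (hpos r) (hdet r s)).const_mul _
      _ = _ := by
          refine Finset.sum_congr rfl fun r _ => Finset.sum_congr rfl fun s _ => ?_
          rw [integral_const_mul, twoD t (hpos r) (hpos s) (hdet r s)]
  have h1V : (0:ℝ) < 1 + V := by linarith
  have hmarg : (∫ x : ℝ, Real.cos (t * x) * ((1 - p) * gDens 1 x + p * gDens (1 + V) x))
      = (1 - p) * Real.exp (-(1 * t^2)/2) + p * Real.exp (-((1+V) * t^2)/2) := by
    have hpt : ∀ x : ℝ, Real.cos (t * x) * ((1 - p) * gDens 1 x + p * gDens (1 + V) x)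
        = (1 - p) * (Real.cos (t * x + 0) * gDens 1 x)
          + p * (Real.cos (t * x + 0) * gDens (1 + V) x) := by
      intro x; rw [add_zero]; ring
    simp only [hpt]
    rw [integral_add ((integrable_cos_gDens one_pos t 0).const_mul _)
        ((integrable_cos_gDens h1V t 0).const_mul _),
      integral_const_mul, integral_const_mul, integral_cos_gDens one_pos t 0,
      integral_cos_gDens h1V t 0, Real.cos_zero, one_mul, one_mul]
    ring
  rw [hbiv, hmarg, ht2]
  simp only [Fintype.sum_bool, Bool.toNat_true, Bool.toNat_false, Nat.cast_one, Nat.cast_zero]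
  norm_num
  set A := Real.exp (-(γ * L)) with hA
  set B := Real.exp (-(V * γ * L)) with hB
  set P := Real.exp (-(σ * γ * L)) with hP
  set Q := Real.exp (σ * γ * L) with hQ
  have hPQ : P * Q = 1 := by
    rw [hP, hQ, ← Real.exp_add, show -(σ * γ * L) + σ * γ * L = 0 from by ring, Real.exp_zero]
  have e1 : rexp (-((1 + V + (1 + V) + 2 * σ) * (2 * γ * L)) / 2) = A^2 * B^2 * P^2 := by
    rw [hA, hB, hP]; simp only [← Real.exp_nat_mul, ← Real.exp_add]; congr 1; push_cast; ring
  have e2 : rexp (-((1 + V + (1 + V) - 2 * σ) * (2 * γ * L)) / 2) = A^2 * B^2 * Q^2 := by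
    rw [hA, hB, hQ]; simp only [← Real.exp_nat_mul, ← Real.exp_add]; congr 1; push_cast; ring
  have e3 : rexp (-((1 + V + 1 + 2 * σ) * (2 * γ * L)) / 2) = A^2 * B * P^2 := by
    rw [hA, hB, hP]; simp only [← Real.exp_nat_mul, ← Real.exp_add]; congr 1; push_cast; ring
  have e4 : rexp (-((1 + V + 1 - 2 * σ) * (2 * γ * L)) / 2) = A^2 * B * Q^2 := by
    rw [hA, hB, hQ]; simp only [← Real.exp_nat_mul, ← Real.exp_add]; congr 1; push_cast; ring
  have e5 : rexp (-((1 + (1 + V) + 2 * σ) * (2 * γ * L)) / 2) = A^2 * B * P^2 := by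
    rw [hA, hB, hP]; simp only [← Real.exp_nat_mul, ← Real.exp_add]; congr 1; push_cast; ring
  have e6 : rexp (-((1 + (1 + V) - 2 * σ) * (2 * γ * L)) / 2) = A^2 * B * Q^2 := by
    rw [hA, hB, hQ]; simp only [← Real.exp_nat_mul, ← Real.exp_add]; congr 1; push_cast; ring
  have e7 : rexp (-((2 + 2 * σ) * (2 * γ * L)) / 2) = A^2 * P^2 := by
    rw [hA, hP]; simp only [← Real.exp_nat_mul, ← Real.exp_add]; congr 1; push_cast; ring
  have e8 : rexp (-((2 - 2 * σ) * (2 * γ * L)) / 2) = A^2 * Q^2 := by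
    rw [hA, hQ]; simp only [← Real.exp_nat_mul, ← Real.exp_add]; congr 1; push_cast; ring
  have e9 : rexp (-(2 * γ * L) / 2) = A := by
    rw [hA]; congr 1; ring
  have e10 : rexp (-((1 + V) * (2 * γ * L)) / 2) = A * B := by
    rw [hA, hB, ← Real.exp_add]; congr 1; ring
  have r1 : (m:ℝ) ^ (-(2 * γ)) = A^2 := by
    rw [Real.rpow_def_of_pos hm0, ← hLdef, hA]
    simp only [← Real.exp_nat_mul]; congr 1; push_cast; ring
  have r2 : (m:ℝ) ^ (-(γ * σ)) = P := by
    rw [Real.rpow_def_of_pos hm0, ← hLdef, hP]; congr 1; ring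
  have r3 : (m:ℝ) ^ (γ * σ) = Q := by
    rw [Real.rpow_def_of_pos hm0, ← hLdef, hQ]; congr 1; ring
  have r4 : (m:ℝ) ^ (-(V * γ)) = B := by
    rw [Real.rpow_def_of_pos hm0, ← hLdef, hB]; congr 1; ring
  rw [e1, e2, e3, e4, e5, e6, e7, e8, e9, e10, r1, r2, r3, r4]
  linear_combination ((1 - p) * A + p * A * B)^2 * hPQ
end

section
/- (Lemma 3.2.) Let Σ be a symmetric positive definite m×m real matrix, fix the index 1, let g ∈ ℝ^m be the first column of Σ, and let T ⊆ {2,…,m} be a (possibly empty) set of indices not containing 1. For j ∉ T, let R = {1,…,m} \ (T ∪ {j}), let Σ_R be the submatrix of Σ on rows and columns in R, let c_j = (Σ_{rj})_{r∈R}, let x_R = (x_r)_{r∈R}, let σ_{j·T} = Σ_{jj} − c_jᵀ Σ_R⁻¹ c_j > 0, and define U_{T,j}(x) = ( x_j − c_jᵀ Σ_R⁻¹ x_R ) / σ_{j·T}^{1/2}. Then for every x ∈ ℝ^m and every r ∈ ℝ: (i) U_{T,1}(x + r g) = U_{T,1}(x) + r · σ_{1·T}^{1/2}; and (ii) for every j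 ∉ T ∪ {1}, U_{T,j}(x + r g) = U_{T,j}(x). -/
open Matrix MeasureTheory Real Filter

/-- Schur complement `σ_{j·T} = Σ_{jj} − c_jᵀ Σ_R⁻¹ c_j`, with
`R = {1,…,m} \ (T ∪ {j})`. -/
noncomputable def mrdSchur {m : ℕ} (Sig : Matrix (Fin m) (Fin m) ℝ)
    (T : Finset (Fin m)) (j : Fin m) : ℝ :=
  Sig j j -
    (fun r : {r : Fin m // r ∈ (insert j T)ᶜ} => Sig r.1 j) ⬝ᵥ
      ((Sig.submatrix (Subtype.val : {r : Fin m // r ∈ (insert j T)ᶜ} → Fin m)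
          Subtype.val)⁻¹ *ᵥ
        fun r : {r : Fin m // r ∈ (insert j T)ᶜ} => Sig r.1 j)

/-- The standardized adaptively formed residual
`U_{T,j}(x) = (x_j − c_jᵀ Σ_R⁻¹ x_R) / σ_{j·T}^{1/2}` of the MRD procedure. -/
noncomputable def mrdU {m : ℕ} (Sig : Matrix (Fin m) (Fin m) ℝ)
    (T : Finset (Fin m)) (j : Fin m) (x : Fin m → ℝ) : ℝ :=
  (x j -
      (fun r : {r : Fin m // r ∈ (insert j T)ᶜ} => Sig r.1 j) ⬝ᵥ
        ((Sig.submatrix (Subtype.val : {r : Fin m // r ∈ (insert j T)ᶜ} → Fin m)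
            Subtype.val)⁻¹ *ᵥ
          fun r : {r : Fin m // r ∈ (insert j T)ᶜ} => x r.1)) /
    Real.sqrt (mrdSchur Sig T j)

lemma posDef_submatrix_inj {m : ℕ} {Sig : Matrix (Fin m) (Fin m) ℝ} (h : Sig.PosDef)
    {S : Type*} [Fintype S] (e : S → Fin m) (he : Function.Injective e) :
    (Sig.submatrix e e).PosDef := by
  classical
  refine PosDef.of_dotProduct_mulVec_pos (h.1.submatrix e) fun x hx => ?_
  set y : Fin m → ℝ := fun k => ∑ s, if e s = k then x s else 0 with hy
  have hys : ∀ s, y (e s) = x s := by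
    intro s
    simp only [hy]
    rw [Finset.sum_eq_single s]
    · simp
    · intro t _ hts
      exact if_neg fun hh => hts (he hh)
    · simp
  have hyne : y ≠ 0 := by
    obtain ⟨s, hs⟩ : ∃ s, x s ≠ 0 := by
      by_contra hc
      push_neg at hc
      exact hx (funext hc)
    intro h0
    exact hs (by rw [← hys s, h0]; rfl)
  have key : star x ⬝ᵥ (Sig.submatrix e e *ᵥ x) = star y ⬝ᵥ (Sig *ᵥ y) := by
    simp only [star_trivial, dotProduct, mulVec, submatrix_apply]
    have inner : ∀ k, (∑ l, Sig k l * y l) = ∑ t, Sig k (e t) * x t := by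
      intro k
      simp only [hy, Finset.mul_sum]
      rw [Finset.sum_comm]
      congr 1; ext t
      simp [Finset.sum_ite_eq, mul_ite]
    calc (∑ s, x s * ∑ t, Sig (e s) (e t) * x t)
        = ∑ s, ∑ k, (if e s = k then x s * ∑ t, Sig k (e t) * x t else 0) := by
          congr 1; ext s; rw [Finset.sum_ite_eq (Finset.univ) (e s)]; simp
      _ = ∑ k, ∑ s, (if e s = k then x s * ∑ t, Sig k (e t) * x t else 0) := Finset.sum_comm
      _ = ∑ k, y k * ∑ l, Sig k l * y l := by
          congr 1; ext k
          rw [inner, hy]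
          simp only [Finset.sum_mul]
          congr 1; ext s
          split <;> simp
  rw [key]
  exact h.dotProduct_mulVec_pos hyne

/-- Lemma 3.2: translating the data along the first column `g` of `Σ` shifts the
residual of coordinate `i₀` by `r σ_{i₀·T}^{1/2}` and leaves every other residual
unchanged. -/
theorem stmt15 {m : ℕ} (Sig : Matrix (Fin m) (Fin m) ℝ) (hSig : Sig.PosDef)
    (i₀ : Fin m) (T : Finset (Fin m)) (hT : i₀ ∉ T) :
    (∀ (x : Fin m → ℝ) (r : ℝ),
        mrdU Sig T i₀ (x + r • fun k => Sig k i₀) =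
          mrdU Sig T i₀ x + r * Real.sqrt (mrdSchur Sig T i₀)) ∧
    (∀ j : Fin m, j ∉ T → j ≠ i₀ → ∀ (x : Fin m → ℝ) (r : ℝ),
        mrdU Sig T j (x + r • fun k => Sig k i₀) = mrdU Sig T j x) := by
  constructor
  · intro x r
    unfold mrdU
    set A := Sig.submatrix (Subtype.val : {r : Fin m // r ∈ (insert i₀ T)ᶜ} → Fin m) Subtype.val
    set c : {r : Fin m // r ∈ (insert i₀ T)ᶜ} → ℝ := fun r => Sig r.1 i₀
    have hx' : (fun s : {r : Fin m // r ∈ (insert i₀ T)ᶜ} =>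
        (x + r • fun k => Sig k i₀) s.1) = (fun s => x s.1) + r • c := by
      funext s; simp [c, mul_comm]
    rw [hx', mulVec_add, mulVec_smul, dotProduct_add, dotProduct_smul, smul_eq_mul]
    have hs : mrdSchur Sig T i₀ = Sig i₀ i₀ - c ⬝ᵥ (A⁻¹ *ᵥ c) := rfl
    have : x i₀ + r * Sig i₀ i₀ - (c ⬝ᵥ (A⁻¹ *ᵥ fun s => x s.1) + r * (c ⬝ᵥ (A⁻¹ *ᵥ c)))
        = (x i₀ - c ⬝ᵥ (A⁻¹ *ᵥ fun s => x s.1)) + r * (Sig i₀ i₀ - c ⬝ᵥ (A⁻¹ *ᵥ c)) := by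
      ring
    simp only [Pi.add_apply, Pi.smul_apply, smul_eq_mul]
    rw [this, ← hs, add_div, mul_div_assoc, Real.div_sqrt]
  · intro j hjT hji x r
    unfold mrdU
    set A := Sig.submatrix (Subtype.val : {r : Fin m // r ∈ (insert j T)ᶜ} → Fin m) Subtype.val
      with hA
    set c : {r : Fin m // r ∈ (insert j T)ᶜ} → ℝ := fun r => Sig r.1 j
    have hApd : A.PosDef := posDef_submatrix_inj hSig _ Subtype.val_injective
    have hdet : IsUnit A.det := hApd.det_pos.ne'.isUnit
    have hi₀ : i₀ ∈ (insert j T)ᶜ := Finset.mem_compl.2 (by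
      simp only [Finset.mem_insert, not_or]; exact ⟨fun h => hji h.symm, hT⟩)
    set t0 : {r : Fin m // r ∈ (insert j T)ᶜ} := ⟨i₀, hi₀⟩
    set d : {r : Fin m // r ∈ (insert j T)ᶜ} → ℝ := fun s => Sig s.1 i₀ with hd
    have hdA : d = A *ᵥ Pi.single t0 1 := by
      funext s; simp [hd, hA, mulVec_single, t0]
    have hinvd : A⁻¹ *ᵥ d = Pi.single t0 1 := by
      rw [hdA, mulVec_mulVec, Matrix.nonsing_inv_mul A hdet, one_mulVec]
    have hcd : c ⬝ᵥ (A⁻¹ *ᵥ d) = Sig j i₀ := by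
      rw [hinvd, dotProduct_single]
      simpa [c, t0] using (congrFun (congrFun hSig.1 i₀) j).symm
    have hx' : (fun s : {r : Fin m // r ∈ (insert j T)ᶜ} =>
        (x + r • fun k => Sig k i₀) s.1) = (fun s => x s.1) + r • d := by
      funext s; simp [hd, mul_comm]
    rw [hx', mulVec_add, mulVec_smul, dotProduct_add, dotProduct_smul, smul_eq_mul, hcd]
    simp only [Pi.add_apply, Pi.smul_apply, smul_eq_mul]
    ring_nf
end
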